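/- Let K_l(β) be a family of symmetric positive semi-definite l×l correlation matrices tending to a singular matrix as β → ∞, let X be the block-diagonal nl×kl matrix of Stiefel matrices X_i, and let X_⊥ be an nl×(nl−kl) orthonormal completion. Then the objective h(β) = n log|K_l| + log|X^T(K_l^{-1} ⊗ I_n)X| satisfies h(β) = log|X_⊥^T (K_l ⊗ I_n) X_⊥|; in particular h tends to −∞ as K_l tends to a singular matrix, so maximizing the modified marginal likelihood selects a singular covariance matrix. -/

import Mathlib

open Matrix Kronecker

/-!
With `P = 𝕏 𝕏ᵀ` and `X⊥ X⊥ᵀ = 1 - P`, the Weinstein–Aronszajn identity turns both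
`|X⊥ᵀ A X⊥|` and `|𝕏ᵀ A⁻¹ 𝕏|` into determinants of `nl × nl` matrices, namely
`|1 + (A - 1)(1 - P)|` and `|1 + (A⁻¹ - 1) P|`, and `A (1 + (A⁻¹ - 1) P) = 1 + (A - 1)(1 - P)`.
Taking `A = I_n ⊗ K` gives `|X⊥ᵀ A X⊥| = |K|ⁿ |𝕏ᵀ A⁻¹ 𝕏|`, and both factors are positive.
-/

namespace Matrix

variable {m p q R : Type*} [Fintype m] [Fintype p] [Fintype q] [DecidableEq p] [DecidableEq q]

lemma det_transpose_mul_mul_of_transpose_mul_self_eq_one [DecidableEq m] [CommRing R]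
    {V : Matrix m q R} (hV : Vᵀ * V = 1) (A : Matrix m m R) :
    (Vᵀ * A * V).det = (1 + (A - 1) * (V * Vᵀ)).det := by
  have hconj : Vᵀ * A * V = 1 + Vᵀ * ((A - 1) * V) := by
    rw [Matrix.sub_mul, Matrix.one_mul, Matrix.mul_sub, hV, Matrix.mul_assoc]
    abel
  rw [hconj, det_one_add_mul_comm, Matrix.mul_assoc]

lemma det_transpose_mul_mul_eq_det_mul_det_inv [DecidableEq m] [CommRing R] {U : Matrix m p R}
    {V : Matrix m q R} (hU : Uᵀ * U = 1) (hV : Vᵀ * V = 1) (hUV : U * Uᵀ + V * Vᵀ = 1)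
    {A : Matrix m m R} (hA : IsUnit A.det) :
    (Vᵀ * A * V).det = A.det * (Uᵀ * A⁻¹ * U).det := by
  rw [det_transpose_mul_mul_of_transpose_mul_self_eq_one hV,
    det_transpose_mul_mul_of_transpose_mul_self_eq_one hU, ← det_mul, eq_sub_of_add_eq' hUV]
  congr 1
  have hexpand : A * (1 + (A⁻¹ - 1) * (U * Uᵀ)) = A + A * A⁻¹ * (U * Uᵀ) - A * (U * Uᵀ) := by
    noncomm_ring
  rw [hexpand, mul_nonsing_inv A hA]
  noncomm_ring

lemma PosDef.transpose_mul_mul_of_transpose_mul_self_eq_one {A : Matrix m m ℝ} (hA : A.PosDef)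
    {U : Matrix m p ℝ} (hU : Uᵀ * U = 1) : (Uᵀ * A * U).PosDef := by
  have hinj : Function.Injective U.mulVec := Function.LeftInverse.injective (g := Uᵀ.mulVec)
    fun x => by rw [mulVec_mulVec, hU, one_mulVec]
  simpa only [conjTranspose_eq_transpose_of_trivial] using hA.conjTranspose_mul_mul_same hinj

lemma blockDiagonal_transpose_mul_self {n k l : Type*} [Fintype n] [Fintype l] [DecidableEq k]
    [DecidableEq l] [Semiring R] {X : l → Matrix n k R} (hX : ∀ i, (X i)ᵀ * X i = 1) :
    (blockDiagonal X)ᵀ * blockDiagonal X = 1 := by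
  rw [blockDiagonal_transpose, ← blockDiagonal_mul]
  simp only [hX]
  exact blockDiagonal_one

end Matrix

theorem stmt18_general (n k l : ℕ)
    (K : Matrix (Fin l) (Fin l) ℝ) (hK : K.PosDef)
    (X : Fin l → Matrix (Fin n) (Fin k) ℝ) (hX : ∀ i, (X i)ᵀ * X i = 1)
    (ι : Type*) [Fintype ι] [DecidableEq ι]
    (Xp : Matrix (Fin n × Fin l) ι ℝ)
    (hXp : Xpᵀ * Xp = 1)
    (hcompl : Matrix.blockDiagonal X * (Matrix.blockDiagonal X)ᵀ + Xp * Xpᵀ = 1) :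
    (n : ℝ) * Real.log K.det
        + Real.log (((Matrix.blockDiagonal X)ᵀ
            * ((1 : Matrix (Fin n) (Fin n) ℝ) ⊗ₖ K⁻¹)
            * Matrix.blockDiagonal X).det)
      = Real.log ((Xpᵀ * ((1 : Matrix (Fin n) (Fin n) ℝ) ⊗ₖ K) * Xp).det) := by
  have hA : ((1 : Matrix (Fin n) (Fin n) ℝ) ⊗ₖ K).PosDef := PosDef.one.kronecker hK
  have hdetA : ((1 : Matrix (Fin n) (Fin n) ℝ) ⊗ₖ K).det = K.det ^ n := by
    simp [det_kronecker]
  have hinv : (1 : Matrix (Fin n) (Fin n) ℝ) ⊗ₖ K⁻¹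
      = ((1 : Matrix (Fin n) (Fin n) ℝ) ⊗ₖ K)⁻¹ := by
    rw [inv_kronecker, inv_one]
  have h𝕏 := blockDiagonal_transpose_mul_self hX
  have hpos := (hA.inv.transpose_mul_mul_of_transpose_mul_self_eq_one h𝕏).det_pos
  rw [hinv, det_transpose_mul_mul_eq_det_mul_det_inv h𝕏 hXp hcompl hA.det_pos.ne'.isUnit,
    Real.log_mul hA.det_pos.ne' hpos.ne', hdetA, Real.log_pow]

/-- with K positive definite, 𝕏 = diag(X_1,...,X_l) block-diagonal with
Stiefel blocks, and X⊥ an orthonormal completion of 𝕏, the modified marginal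
log-likelihood objective satisfies
n log|K| + log|𝕏ᵀ (K⁻¹ ⊗ I_n) 𝕏| = log|X⊥ᵀ (K ⊗ I_n) X⊥|;
in particular it tends to −∞ as K tends to a singular matrix, so maximizing the
modified marginal likelihood selects a singular covariance matrix. -/
theorem stmt18 (n k l : ℕ)
    (K : Matrix (Fin l) (Fin l) ℝ) (hK : K.PosDef)
    (X : Fin l → Matrix (Fin n) (Fin k) ℝ) (hX : ∀ i, (X i)ᵀ * X i = 1)
    (ι : Type*) [Fintype ι] [DecidableEq ι]
    (Xp : Matrix (Fin n × Fin l) ι ℝ)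
    (hXp : Xpᵀ * Xp = 1)
    (horth : Xpᵀ * Matrix.blockDiagonal X = 0)
    (hcompl : Matrix.blockDiagonal X * (Matrix.blockDiagonal X)ᵀ + Xp * Xpᵀ = 1) :
    (n : ℝ) * Real.log K.det
        + Real.log (((Matrix.blockDiagonal X)ᵀ
            * ((1 : Matrix (Fin n) (Fin n) ℝ) ⊗ₖ K⁻¹)
            * Matrix.blockDiagonal X).det)
      = Real.log ((Xpᵀ * ((1 : Matrix (Fin n) (Fin n) ℝ) ⊗ₖ K) * Xp).det) :=
  stmt18_general n k l K hK X hX ι Xp hXp hcompl
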